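/- arXiv:1611.07468 — 6 statements merged into one kernel-verified Lean document; each statement's English description precedes it below -/
import Mathlib

section
/- Let G and H be connected graphs with at least 2 vertices and U a non-empty subset of V(G). Then F(G(U)ΠH) = |V(H)|·F(G) + 6|E(H)|·Σ_{u∈U} d_G(u)² + 3M₁(H)·Σ_{u∈U} d_G(u) + |U|·F(H). -/
open SimpleGraph Finset
open scoped Classical

noncomputable section

/-- The generalized hierarchical product `G(U)ΠH`. -/
def hierProd {α β : Type*} (G : SimpleGraph α) (H : SimpleGraph β) (U : Set α) :
    SimpleGraph (α × β) where
  Adj p q := (p.1 = q.1 ∧ p.1 ∈ U ∧ H.Adj p.2 q.2) ∨ (p.2 = q.2 ∧ G.Adj p.1 q.1)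
  symm := by
    constructor
    rintro p q (⟨h1, h2, h3⟩ | ⟨h1, h2⟩)
    · exact Or.inl ⟨h1.symm, h1 ▸ h2, h3.symm⟩
    · exact Or.inr ⟨h1.symm, h2.symm⟩
  loopless := by
    constructor
    rintro p (⟨_, _, h⟩ | ⟨_, h⟩)
    · exact H.loopless.irrefl _ h
    · exact G.loopless.irrefl _ h

/-- The F-index (forgotten topological index): sum of cubes of degrees. -/
def Findex {α : Type*} [Fintype α] (G : SimpleGraph α) : ℕ :=
  ∑ v, G.degree v ^ 3

/-- The first Zagreb index: sum of squares of degrees. -/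
def M1 {α : Type*} [Fintype α] (G : SimpleGraph α) : ℕ :=
  ∑ v, G.degree v ^ 2

/-- The general first Zagreb index with exponent `n`. -/
def xiIndex {α : Type*} [Fintype α] (G : SimpleGraph α) (n : ℕ) : ℕ :=
  ∑ v, G.degree v ^ n

/-- The redefined Zagreb index `ReZG(G) = Σ_{uv∈E} d(u)d(v)(d(u)+d(v))`. -/
def ReZG {α : Type*} [Fintype α] (G : SimpleGraph α) : ℕ :=
  ∑ e ∈ G.edgeFinset,
    Sym2.lift ⟨fun u v => G.degree u * G.degree v * (G.degree u + G.degree v),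
      fun u v => by ring⟩ e

/-- The subdivision graph `S(G)`: each edge replaced by a path of length two. -/
def Sgraph {α : Type*} (G : SimpleGraph α) : SimpleGraph (α ⊕ ↥G.edgeSet) where
  Adj x y :=
    match x, y with
    | Sum.inl u, Sum.inr e => u ∈ (e : Sym2 α)
    | Sum.inr e, Sum.inl u => u ∈ (e : Sym2 α)
    | _, _ => False
  symm := by constructor; rintro (u | e) (v | f) h <;> simp_all
  loopless := by constructor; rintro (u | e) h <;> simp_all

/-- The graph on `V(G) ⊕ E(G)` whose only edges are the original edges of `G`. -/
def Ograph {α : Type*} (G : SimpleGraph α) : SimpleGraph (α ⊕ ↥G.edgeSet) where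
  Adj x y :=
    match x, y with
    | Sum.inl u, Sum.inl v => G.Adj u v
    | _, _ => False
  symm := by constructor; rintro (u | e) (v | f) h <;> simp_all <;> exact h.symm
  loopless := by constructor; rintro (u | e) h <;> simp_all

/-- The graph on `V(G) ⊕ E(G)` whose edges join pairs of adjacent edges of `G`
(line-graph adjacency). -/
def Lgraph {α : Type*} (G : SimpleGraph α) : SimpleGraph (α ⊕ ↥G.edgeSet) where
  Adj x y :=
    match x, y with
    | Sum.inr e, Sum.inr f => e ≠ f ∧ ∃ u, u ∈ (e : Sym2 α) ∧ u ∈ (f : Sym2 α)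
    | _, _ => False
  symm := by
    constructor
    rintro (u | e) (v | f) h <;> simp_all
    exact ⟨Ne.symm h.1, h.2.imp fun u hu => hu.symm⟩
  loopless := by constructor; rintro (u | e) h <;> simp_all

/-- The triangle parallel graph `R(G)`. -/
def Rgraph {α : Type*} (G : SimpleGraph α) : SimpleGraph (α ⊕ ↥G.edgeSet) :=
  Sgraph G ⊔ Ograph G

/-- The line superposition graph `Q(G)`. -/
def Qgraph {α : Type*} (G : SimpleGraph α) : SimpleGraph (α ⊕ ↥G.edgeSet) :=
  Sgraph G ⊔ Lgraph G

/-- The total graph `T(G)`. -/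
def Tgraph {α : Type*} (G : SimpleGraph α) : SimpleGraph (α ⊕ ↥G.edgeSet) :=
  Sgraph G ⊔ Ograph G ⊔ Lgraph G

/-- The F-sum `G +_F H`, where `K` is one of `S(G), R(G), Q(G), T(G)`:
the generalized hierarchical product `K(V(G))ΠH`. -/
def FSum {α β : Type*} {G : SimpleGraph α} (K : SimpleGraph (α ⊕ ↥G.edgeSet))
    (H : SimpleGraph β) : SimpleGraph ((α ⊕ ↥G.edgeSet) × β) :=
  hierProd K H (Set.range Sum.inl)

end

/-!
The degree of `(u, v)` in `G(U)ΠH` is `d_G(u) + d_H(v)` when `u ∈ U` and `d_G(u)` otherwise.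
Expanding the cube fibrewise over `u`, the cross terms sum to `3 d_G(u)² Σ d_H = 6 |E(H)| d_G(u)²`
(handshake lemma) and `3 d_G(u) M₁(H)`.
-/

theorem Finset.sum_add_pow_three {ι R : Type*} [CommSemiring R] (s : Finset ι) (a : R)
    (f : ι → R) :
    ∑ i ∈ s, (a + f i) ^ 3 =
      #s * a ^ 3 + 3 * a ^ 2 * ∑ i ∈ s, f i + 3 * a * ∑ i ∈ s, f i ^ 2 + ∑ i ∈ s, f i ^ 3 := by
  have hexpand (x : R) : (a + x) ^ 3 = a ^ 3 + 3 * a ^ 2 * x + 3 * a * x ^ 2 + x ^ 3 := by ring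
  simp only [hexpand, sum_add_distrib, sum_const, nsmul_eq_mul, ← mul_sum]

section HierProd

variable {α β : Type*} (G : SimpleGraph α) (H : SimpleGraph β) (U : Set α)

@[simp]
lemma hierProd_adj {p q : α × β} :
    (hierProd G H U).Adj p q ↔ p.1 = q.1 ∧ p.1 ∈ U ∧ H.Adj p.2 q.2 ∨ p.2 = q.2 ∧ G.Adj p.1 q.1 :=
  Iff.rfl

variable [Fintype α] [Fintype β]

lemma hierProd_neighborFinset (u : α) (v : β) :
    (hierProd G H U).neighborFinset (u, v) =
      G.neighborFinset u ×ˢ {v} ∪ if u ∈ U then {u} ×ˢ H.neighborFinset v else ∅ := by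
  ext ⟨a, b⟩
  by_cases hu : u ∈ U <;> simp [hu, and_comm, eq_comm, or_comm]

lemma hierProd_degree (u : α) (v : β) :
    (hierProd G H U).degree (u, v) = G.degree u + if u ∈ U then H.degree v else 0 := by
  have hdisj : Disjoint (G.neighborFinset u ×ˢ {v})
      (if u ∈ U then {u} ×ˢ H.neighborFinset v else ∅) := by
    split_ifs
    · exact disjoint_product.mpr <| .inl <| disjoint_singleton_right.mpr <| by simp
    · exact disjoint_empty_right _
  rw [← card_neighborFinset_eq_degree, hierProd_neighborFinset, card_union_of_disjoint hdisj]
  split_ifs <;> simp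

lemma sum_hierProd_degree_pow_three (u : α) :
    ∑ v, (hierProd G H U).degree (u, v) ^ 3 =
      Fintype.card β * G.degree u ^ 3 +
        if u ∈ U then 6 * #H.edgeFinset * G.degree u ^ 2 + 3 * M1 H * G.degree u + Findex H
        else 0 := by
  simp only [hierProd_degree]
  split_ifs
  · rw [sum_add_pow_three, sum_degrees_eq_twice_card_edges, card_univ, Nat.cast_id, M1, Findex]
    ring
  · simp

end HierProd

theorem Findex_hierProd_general {α β : Type*} [Fintype α] [Fintype β]
    (G : SimpleGraph α) (H : SimpleGraph β) (U : Set α) :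
    Findex (hierProd G H U) =
      Fintype.card β * Findex G
        + 6 * H.edgeFinset.card * ∑ u ∈ U.toFinset, G.degree u ^ 2
        + 3 * M1 H * ∑ u ∈ U.toFinset, G.degree u
        + U.toFinset.card * Findex H := by
  rw [Findex, Fintype.sum_prod_type]
  simp_rw [sum_hierProd_degree_pow_three, ← Set.mem_toFinset]
  rw [sum_add_distrib, sum_ite_mem, univ_inter, ← mul_sum, sum_add_distrib, sum_add_distrib,
    sum_const, ← mul_sum, ← mul_sum, ← Findex, smul_eq_mul]
  ring

theorem Findex_hierProd {α β : Type*} [Fintype α] [Fintype β]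
    (G : SimpleGraph α) (H : SimpleGraph β) (U : Set α)
    (hcard : 2 ≤ Fintype.card α)
    (hG : G.Connected) (hH : H.Connected) (hU : U.Nonempty) :
    Findex (hierProd G H U) =
      Fintype.card β * Findex G
        + 6 * H.edgeFinset.card * ∑ u ∈ U.toFinset, G.degree u ^ 2
        + 3 * M1 H * ∑ u ∈ U.toFinset, G.degree u
        + U.toFinset.card * Findex H :=
  Findex_hierProd_general G H U
end

section
/- Let S(G) be the subdivision graph of G, obtained by replacing each edge of G by a path of length two. Then F(S(G)) = F(G) + 8|E(G)|. -/
open SimpleGraph Finset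
open scoped Classical

section Sgraph

variable {α : Type*} (G : SimpleGraph α)

@[simp]
lemma sgraph_adj_inl_inr {u : α} {e : G.edgeSet} :
    (Sgraph G).Adj (Sum.inl u) (Sum.inr e) ↔ u ∈ (e : Sym2 α) :=
  Iff.rfl

@[simp]
lemma sgraph_adj_inr_inl {u : α} {e : G.edgeSet} :
    (Sgraph G).Adj (Sum.inr e) (Sum.inl u) ↔ u ∈ (e : Sym2 α) :=
  Iff.rfl

@[simp]
lemma not_sgraph_adj_inl_inl {u v : α} : ¬(Sgraph G).Adj (Sum.inl u) (Sum.inl v) :=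
  id

@[simp]
lemma not_sgraph_adj_inr_inr {e f : G.edgeSet} : ¬(Sgraph G).Adj (Sum.inr e) (Sum.inr f) :=
  id

variable [Fintype α]

lemma sgraph_neighborFinset_inl (u : α) :
    (Sgraph G).neighborFinset (Sum.inl u) =
      ((G.incidenceFinset u).subtype (· ∈ G.edgeSet)).map Function.Embedding.inr := by
  ext (v | e) <;> simp [incidenceSet, and_comm]

lemma sgraph_degree_inl (u : α) : (Sgraph G).degree (Sum.inl u) = G.degree u := by
  rw [← card_neighborFinset_eq_degree, sgraph_neighborFinset_inl, card_map, card_subtype,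
    filter_true_of_mem fun e he => G.incidenceSet_subset u (by simpa using he),
    card_incidenceFinset_eq_degree]

lemma sgraph_neighborFinset_inr {a b : α} (h : s(a, b) ∈ G.edgeSet) :
    (Sgraph G).neighborFinset (Sum.inr ⟨s(a, b), h⟩) = {Sum.inl a, Sum.inl b} := by
  ext (v | e) <;> simp

lemma sgraph_degree_inr (e : G.edgeSet) : (Sgraph G).degree (Sum.inr e) = 2 := by
  obtain ⟨e, he⟩ := e
  induction e using Sym2.ind with
  | _ a b =>
    rw [← card_neighborFinset_eq_degree, sgraph_neighborFinset_inr,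
      card_pair (by simpa using G.ne_of_adj he)]

end Sgraph

theorem Findex_Sgraph {α : Type*} [Fintype α] (G : SimpleGraph α) :
    Findex (Sgraph G) = Findex G + 8 * G.edgeFinset.card := by
  rw [Findex, Findex, Fintype.sum_sum_type, edgeFinset_card]
  simp only [sgraph_degree_inl, sgraph_degree_inr, sum_const, card_univ, smul_eq_mul]
  ring
end

section
/- Let R(G) be the triangle parallel graph of G, obtained by replacing each edge of G by a triangle (i.e., adding a new vertex for each edge joined to both endpoints). Then F(R(G)) = 8F(G) + 8|E(G)|. -/
open SimpleGraph Finset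
open scoped Classical

/-!
In `R(G)` an original vertex `u` keeps its `d(u)` old neighbours and gains one new neighbour for
each incident edge, so its degree doubles, while every edge vertex has degree `2`. Summing cubes
gives `8 F(G)` over the old vertices and `2³ = 8` for each edge.
-/

theorem SimpleGraph.card_filter_mem_edgeSet_eq_degree {α : Type*} [Fintype α]
    (G : SimpleGraph α) (u : α) : #{e : G.edgeSet | u ∈ (e : Sym2 α)} = G.degree u := by
  rw [← card_incidenceFinset_eq_degree, incidenceFinset_eq_filter, ← card_map (.subtype _)]
  congr 1
  ext e
  simp [and_comm]

section Rgraph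

variable {α : Type*} (G : SimpleGraph α)

@[simp]
lemma Rgraph_adj_inl_inl {u v : α} : (Rgraph G).Adj (.inl u) (.inl v) ↔ G.Adj u v := by
  simp [Rgraph, Sgraph, Ograph]

@[simp]
lemma Rgraph_adj_inl_inr {u : α} {e : G.edgeSet} :
    (Rgraph G).Adj (.inl u) (.inr e) ↔ u ∈ (e : Sym2 α) := by
  simp [Rgraph, Sgraph, Ograph]

@[simp]
lemma Rgraph_adj_inr_inl {e : G.edgeSet} {u : α} :
    (Rgraph G).Adj (.inr e) (.inl u) ↔ u ∈ (e : Sym2 α) := by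
  simp [Rgraph, Sgraph, Ograph]

@[simp]
lemma not_Rgraph_adj_inr_inr {e f : G.edgeSet} : ¬ (Rgraph G).Adj (.inr e) (.inr f) := by
  simp [Rgraph, Sgraph, Ograph]

variable [Fintype α]

lemma Rgraph_neighborFinset_inl (u : α) :
    (Rgraph G).neighborFinset (.inl u) =
      (G.neighborFinset u).disjSum {e : G.edgeSet | u ∈ (e : Sym2 α)} := by
  ext (v | e) <;> simp

lemma Rgraph_neighborFinset_inr (e : G.edgeSet) :
    (Rgraph G).neighborFinset (.inr e) = (e : Sym2 α).toFinset.map .inl := by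
  ext (v | f) <;> simp [Sym2.mem_toFinset]

lemma Rgraph_degree_inl (u : α) : (Rgraph G).degree (.inl u) = 2 * G.degree u := by
  rw [← card_neighborFinset_eq_degree, Rgraph_neighborFinset_inl, card_disjSum,
    card_neighborFinset_eq_degree, G.card_filter_mem_edgeSet_eq_degree, two_mul]

lemma Rgraph_degree_inr (e : G.edgeSet) : (Rgraph G).degree (.inr e) = 2 := by
  rw [← card_neighborFinset_eq_degree, Rgraph_neighborFinset_inr, card_map,
    Sym2.card_toFinset_of_not_isDiag _ (G.not_isDiag_of_mem_edgeSet e.2)]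

end Rgraph

theorem Findex_Rgraph {α : Type*} [Fintype α] (G : SimpleGraph α) :
    Findex (Rgraph G) = 8 * Findex G + 8 * G.edgeFinset.card := by
  simp only [Findex, Fintype.sum_sum_type, Rgraph_degree_inl, Rgraph_degree_inr, mul_pow,
    ← mul_sum, sum_const, card_univ, G.edgeFinset_card, smul_eq_mul]
  ring
end

section
/- Let Q(G) be the line superposition graph of G, obtained by inserting a new vertex into each edge of G and joining with edges each pair of new vertices lying on adjacent edges of G. Then F(Q(G)) = F(G) + ξ₄(G) + 3·ReZG(G), where ξ₄(G)=Σ_{v∈V(G)} d_G(v)⁴ and ReZG(G)=Σ_{uv∈E(G)} d_G(u)d_G(v)[d_G(u)+d_G(v)]. -/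
open SimpleGraph Finset
open scoped Classical

/-!
In `Q(G)` an original vertex `v` is adjacent exactly to the new vertices on the edges at `v`, so
it keeps degree `d(v)`; the new vertex on `uv` is adjacent to `u`, `v` and its `d(u) + d(v) - 2`
line-graph neighbours, so it has degree `d(u) + d(v)`. Hence
`F(Q(G)) = F(G) + Σ_{uv} (d(u) + d(v))³`. Expanding the cube, the mixed terms give `3 ReZG(G)`,
and by the weighted handshake lemma `Σ_{uv} (f(u) + f(v)) = Σ_v d(v) f(v)` with `f = d³` the pure
terms give `ξ₄(G)`.
-/

namespace SimpleGraph

variable {α β : Type*} [Fintype α]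

theorem degree_sum_eq_card_inl_add_card_inr [Fintype β] (K : SimpleGraph (α ⊕ β)) (x : α ⊕ β) :
    K.degree x = #{a | K.Adj x (.inl a)} + #{b | K.Adj x (.inr b)} := by
  rw [← card_neighborFinset_eq_degree, neighborFinset_eq_filter, card_filter, card_filter,
    card_filter, Fintype.sum_sum_type]

variable (G : SimpleGraph α)

theorem card_edgeSet_filter_mem (u : α) : #{e : G.edgeSet | u ∈ (e : Sym2 α)} = G.degree u := by
  rw [← card_incidenceFinset_eq_degree, ← card_map (Function.Embedding.subtype _)]
  congr 1
  ext e
  simp [incidenceSet, and_comm]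

/-- The line-graph neighbours of `uv` are the edges at `u` or `v` other than `uv`, and the
incidence sets of `u` and `v` meet exactly in `uv`. -/
theorem degree_lineGraph_add_two {u v : α} (h : G.Adj u v) :
    G.lineGraph.degree ⟨s(u, v), h⟩ + 2 = G.degree u + G.degree v := by
  have hunion : #(G.incidenceFinset u ∪ G.incidenceFinset v) + 1 = G.degree u + G.degree v := by
    rw [← card_incidenceFinset_eq_degree, ← card_incidenceFinset_eq_degree,
      ← card_union_add_card_inter, ← card_singleton s(u, v)]
    congr 2
    apply coe_injective
    push_cast
    exact (G.incidenceSet_inter_incidenceSet_of_adj h).symm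
  have hmem : s(u, v) ∈ G.incidenceFinset u ∪ G.incidenceFinset v := by
    simp [incidenceSet, h]
  rw [← card_neighborFinset_eq_degree, ← card_map (Function.Embedding.subtype _),
    ← hunion, ← card_erase_add_one hmem, add_assoc]
  congr 2
  ext e
  simp [lineGraph_adj_iff_exists, incidenceSet, Subtype.ext_iff, eq_comm (a := s(u, v))]
  tauto

theorem sum_edgeFinset_lift_add {M : Type*} [AddCommMonoid M] (f : α → M) :
    ∑ e ∈ G.edgeFinset, Sym2.lift ⟨fun u v => f u + f v, fun _ _ => add_comm _ _⟩ e =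
      ∑ v, G.degree v • f v := by
  calc ∑ e ∈ G.edgeFinset, Sym2.lift ⟨fun u v => f u + f v, fun _ _ => add_comm _ _⟩ e
      = ∑ e ∈ G.edgeFinset, ∑ v ∈ {v | v ∈ e}, f v := by
        refine sum_congr rfl fun e he => ?_
        induction e using Sym2.ind with
        | _ u v =>
          have huv : u ≠ v := (G.mem_edgeFinset.1 he).ne
          have hends : ({w | w ∈ s(u, v)} : Finset α) = {u, v} := by ext; simp
          rw [hends, sum_pair huv, Sym2.lift_mk]
    _ = ∑ v, ∑ e ∈ G.incidenceFinset v, f v :=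
        sum_comm' fun e v => by simp [incidenceSet, and_comm]
    _ = ∑ v, G.degree v • f v := by simp

end SimpleGraph

section Qgraph

variable {α : Type*} (G : SimpleGraph α)

@[simp] theorem Qgraph_adj_inl_inl (u v : α) : ¬(Qgraph G).Adj (.inl u) (.inl v) :=
  fun h => h.elim id id

@[simp] theorem Qgraph_adj_inl_inr (u : α) (e : G.edgeSet) :
    (Qgraph G).Adj (.inl u) (.inr e) ↔ u ∈ (e : Sym2 α) :=
  ⟨fun h => h.elim id False.elim, Or.inl⟩

@[simp] theorem Qgraph_adj_inr_inl (e : G.edgeSet) (u : α) :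
    (Qgraph G).Adj (.inr e) (.inl u) ↔ u ∈ (e : Sym2 α) :=
  ⟨fun h => h.elim id False.elim, Or.inl⟩

@[simp] theorem Qgraph_adj_inr_inr (e f : G.edgeSet) :
    (Qgraph G).Adj (.inr e) (.inr f) ↔ G.lineGraph.Adj e f := by
  rw [lineGraph_adj_iff_exists]
  exact ⟨fun h => h.elim False.elim id, Or.inr⟩

variable [Fintype α]

theorem degree_Qgraph_inl (u : α) : (Qgraph G).degree (.inl u) = G.degree u := by
  simp [degree_sum_eq_card_inl_add_card_inr, card_edgeSet_filter_mem]

theorem degree_Qgraph_inr {u v : α} (h : G.Adj u v) :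
    (Qgraph G).degree (.inr ⟨s(u, v), h⟩) = G.degree u + G.degree v := by
  rw [degree_sum_eq_card_inl_add_card_inr, ← degree_lineGraph_add_two G h, add_comm]
  simp only [Qgraph_adj_inr_inl, Qgraph_adj_inr_inr, ← card_neighborFinset_eq_degree,
    neighborFinset_eq_filter, ← card_pair h.ne]
  congr 2
  ext
  simp

end Qgraph

theorem Findex_Qgraph {α : Type*} [Fintype α] (G : SimpleGraph α) :
    Findex (Qgraph G) = Findex G + xiIndex G 4 + 3 * ReZG G := by
  let edgeDegree : Sym2 α → ℕ :=
    Sym2.lift ⟨fun u v => G.degree u + G.degree v, fun _ _ => add_comm _ _⟩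
  have hedges : ∑ e : G.edgeSet, (Qgraph G).degree (.inr e) ^ 3 =
      ∑ e ∈ G.edgeFinset, edgeDegree e ^ 3 := by
    rw [sum_subtype G.edgeFinset (fun _ => mem_edgeFinset) (edgeDegree · ^ 3)]
    refine sum_congr rfl fun ⟨e, he⟩ _ => ?_
    induction e using Sym2.ind with
    | _ u v => rw [degree_Qgraph_inr G he]; rfl
  have hcube : ∀ e, edgeDegree e ^ 3 =
      Sym2.lift ⟨fun u v => G.degree u ^ 3 + G.degree v ^ 3, fun _ _ => add_comm _ _⟩ e +
        3 * Sym2.lift ⟨fun u v => G.degree u * G.degree v * (G.degree u + G.degree v),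
          fun u v => by ring⟩ e := by
    refine Sym2.ind fun u v => ?_
    simp only [edgeDegree, Sym2.lift_mk]
    ring
  rw [Findex, Fintype.sum_sum_type, hedges]
  simp only [degree_Qgraph_inl, hcube, sum_add_distrib, ← mul_sum, sum_edgeFinset_lift_add, ReZG]
  simp only [Findex, xiIndex, smul_eq_mul, ← pow_succ', add_assoc]
end

section
/- Let G and H be connected graphs, with |V(G)|≥2. Then F(G+_S H) = |V(H)|F(G) + |V(G)|F(H) + 6|E(H)|M₁(G) + 6|E(G)|M₁(H) + 8|V(H)||E(G)|, where G+_S H is the S-sum of G and H. -/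
open SimpleGraph Finset
open scoped Classical

/-!
In `G +_S H` a vertex `(u, w)` with `u ∈ V(G)` has degree `d_G(u) + d_H(w)`, and a vertex
`(e, w)` with `e ∈ E(G)` keeps its degree `2` from `S(G)`. Summing the cubes, the binomial
expansion of `(d_G(u) + d_H(w))³` together with the handshake lemma `Σ d = 2|E|` gives the
formula, with `8 |V(H)| |E(G)|` coming from the subdivision vertices.
-/

theorem Finset.sum_sum_add_pow_three {ι κ R : Type*} [CommSemiring R] (s : Finset ι)
    (t : Finset κ) (a : ι → R) (b : κ → R) :
    ∑ i ∈ s, ∑ j ∈ t, (a i + b j) ^ 3 =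
      #t • ∑ i ∈ s, a i ^ 3 + 3 * (∑ i ∈ s, a i ^ 2) * ∑ j ∈ t, b j
        + 3 * (∑ i ∈ s, a i) * ∑ j ∈ t, b j ^ 2 + #s • ∑ j ∈ t, b j ^ 3 := by
  calc ∑ i ∈ s, ∑ j ∈ t, (a i + b j) ^ 3
      = ∑ i ∈ s, ∑ j ∈ t, (a i ^ 3 + 3 * a i ^ 2 * b j + 3 * a i * b j ^ 2 + b j ^ 3) :=
        sum_congr rfl fun _ _ => sum_congr rfl fun _ _ => by ring
    _ = _ := by simp only [sum_add_distrib, sum_const, ← mul_sum, ← sum_mul, ← smul_sum]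

namespace SimpleGraph

variable {α β : Type*}

section HierProd

variable [Fintype α] [Fintype β] (K : SimpleGraph α) (H : SimpleGraph β) (U : Set α)

theorem hierProd_neighborFinset (x : α) (w : β) :
    (hierProd K H U).neighborFinset (x, w) =
      K.neighborFinset x ×ˢ {w} ∪ if x ∈ U then {x} ×ˢ H.neighborFinset w else ∅ := by
  ext ⟨y, z⟩
  rw [mem_neighborFinset]
  by_cases hx : x ∈ U <;> simp [hierProd, hx, and_comm, eq_comm, or_comm]

theorem hierProd_degree (x : α) (w : β) :
    (hierProd K H U).degree (x, w) = K.degree x + if x ∈ U then H.degree w else 0 := by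
  have hdisj : Disjoint (K.neighborFinset x ×ˢ {w})
      (if x ∈ U then {x} ×ˢ H.neighborFinset w else ∅) := by
    split_ifs
    · simp only [Finset.disjoint_left, mem_product, mem_neighborFinset, mem_singleton]
      rintro ⟨y, z⟩ ⟨hy, -⟩ ⟨rfl, -⟩
      exact K.loopless.irrefl _ hy
    · exact Finset.disjoint_empty_right _
  rw [← card_neighborFinset_eq_degree, hierProd_neighborFinset, card_union_of_disjoint hdisj,
    card_product, card_singleton, mul_one, card_neighborFinset_eq_degree]
  split_ifs <;> simp

end HierProd

section Subdivision

variable [Fintype α] [Fintype β] (G : SimpleGraph α) (K : SimpleGraph (α ⊕ G.edgeSet))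
  (H : SimpleGraph β)

theorem Sgraph_degree_inl (u : α) : (Sgraph G).degree (Sum.inl u) = G.degree u := by
  rw [← card_neighborSet_eq_degree, ← card_incidenceSet_eq_degree]
  symm
  refine Fintype.card_of_bijective
    (f := fun e : G.incidenceSet u => (⟨Sum.inr ⟨e.1, e.2.1⟩, e.2.2⟩ :
      (Sgraph G).neighborSet (Sum.inl u))) ⟨?_, ?_⟩
  · rintro ⟨e, he⟩ ⟨f, hf⟩ h
    simpa [Subtype.ext_iff] using h
  · rintro ⟨v | ⟨e, he⟩, hx⟩
    · exact absurd hx (by simp [Sgraph, neighborSet])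
    · exact ⟨⟨e, he, hx⟩, rfl⟩

theorem Sgraph_degree_inr (e : G.edgeSet) : (Sgraph G).degree (Sum.inr e) = 2 := by
  obtain ⟨e, he⟩ := e
  induction e with
  | _ a b =>
    have hab : a ≠ b := (G.mem_edgeSet.mp he).ne
    have hnbr : (Sgraph G).neighborFinset (Sum.inr ⟨s(a, b), he⟩) = {Sum.inl a, Sum.inl b} := by
      ext (v | f) <;> rw [mem_neighborFinset] <;> simp [Sgraph]
    rw [← card_neighborFinset_eq_degree, hnbr, card_pair (by simpa using hab)]

theorem FSum_degree_inl (u : α) (w : β) :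
    (FSum K H).degree (Sum.inl u, w) = K.degree (Sum.inl u) + H.degree w := by
  rw [FSum, hierProd_degree]
  simp

theorem FSum_degree_inr (e : G.edgeSet) (w : β) :
    (FSum K H).degree (Sum.inr e, w) = K.degree (Sum.inr e) := by
  rw [FSum, hierProd_degree]
  simp

end Subdivision

end SimpleGraph

theorem Findex_Ssum_general {α β : Type*} [Fintype α] [Fintype β]
    (G : SimpleGraph α) (H : SimpleGraph β) :
    Findex (FSum (Sgraph G) H) =
      Fintype.card β * Findex G + Fintype.card α * Findex H
        + 6 * H.edgeFinset.card * M1 G + 6 * G.edgeFinset.card * M1 H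
        + 8 * Fintype.card β * G.edgeFinset.card := by
  have hsplit : Findex (FSum (Sgraph G) H) =
      ∑ u, ∑ w, (G.degree u + H.degree w) ^ 3 + ∑ _e : G.edgeSet, ∑ _w : β, 2 ^ 3 := by
    simp only [Findex, Fintype.sum_prod_type, Fintype.sum_sum_type, FSum_degree_inl,
      FSum_degree_inr, Sgraph_degree_inl, Sgraph_degree_inr]
  rw [hsplit, sum_sum_add_pow_three, G.sum_degrees_eq_twice_card_edges,
    H.sum_degrees_eq_twice_card_edges]
  simp only [Findex, M1, sum_const, card_univ, smul_eq_mul, ← G.edgeFinset_card]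
  ring

theorem Findex_Ssum {α β : Type*} [Fintype α] [Fintype β]
    (G : SimpleGraph α) (H : SimpleGraph β)
    (hcard : 2 ≤ Fintype.card α) (hG : G.Connected) (hH : H.Connected) :
    Findex (FSum (Sgraph G) H) =
      Fintype.card β * Findex G + Fintype.card α * Findex H
        + 6 * H.edgeFinset.card * M1 G + 6 * G.edgeFinset.card * M1 H
        + 8 * Fintype.card β * G.edgeFinset.card :=
  Findex_Ssum_general G H
end

section
/- Let G and H be connected graphs, with |V(G)|≥2. Then F(G+_T H) = 8|V(H)|F(G) + |V(G)|F(H) + 24|E(H)|M₁(G) + 12|E(G)|M₁(H) + |V(H)|ξ₄(G) + 3|V(H)|ReZG(G), where G+_T H is the T-sum. -/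
open SimpleGraph Finset
open scoped Classical

/-!
In a hierarchical product `K(U)ΠH` the vertex `(x, w)` has degree `d_K(x) + [x ∈ U] d_H(w)`.
In the total graph `T(G)` a vertex `u` has degree `2 d(u)` and an edge `uv` has degree
`d(u) + d(v)` (its two ends, plus the `d(u) - 1 + d(v) - 1` edges meeting it). Hence
`F(G +_T H) = Σ_{u,w} (2 d(u) + d(w))³ + |V(H)| Σ_{uv} (d(u) + d(v))³`; expanding both cubes,
the first sum is evaluated with the handshake lemma, and the second with
`Σ_{uv ∈ E} (f(u) + f(v)) = Σ_v d(v) f(v)` and `(a + b)³ = a³ + b³ + 3ab(a + b)`.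
-/

open SimpleGraph Finset
open scoped Classical

def Sym2.sumOf {V M : Type*} [AddCommMonoid M] (g : V → M) : Sym2 V → M :=
  Sym2.lift ⟨fun a b => g a + g b, fun a b => add_comm (g a) (g b)⟩

@[simp]
theorem Sym2.sumOf_mk {V M : Type*} [AddCommMonoid M] (g : V → M) (u v : V) :
    Sym2.sumOf g s(u, v) = g u + g v :=
  rfl

theorem Sym2.sum_ite_mem_mk {V M : Type*} [Fintype V] [AddCommMonoid M] {u v : V} (huv : u ≠ v)
    (g : V → M) : ∑ a, (if a ∈ s(u, v) then g a else 0) = g u + g v := by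
  rw [← sum_filter, show ({a | a ∈ s(u, v)} : Finset V) = {u, v} by ext; simp, sum_pair huv]

namespace SimpleGraph

variable {V : Type*} [Fintype V]

theorem degree_eq_sum_ite (G : SimpleGraph V) (v : V) :
    G.degree v = ∑ w, if G.Adj v w then 1 else 0 := by
  rw [degree, neighborFinset_eq_filter, card_filter]

theorem sum_edgeSet_eq_sum_edgeFinset {M : Type*} [AddCommMonoid M] (G : SimpleGraph V)
    (f : Sym2 V → M) : ∑ e : G.edgeSet, f e = ∑ e ∈ G.edgeFinset, f e :=
  (sum_subtype _ (fun _ => mem_edgeFinset) f).symm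

theorem sum_edgeSet_ite_mem (G : SimpleGraph V) (v : V) :
    ∑ e : G.edgeSet, (if v ∈ (e : Sym2 V) then 1 else 0) = G.degree v := by
  rw [sum_edgeSet_eq_sum_edgeFinset G (fun e => if v ∈ e then 1 else 0), ← card_filter,
    ← incidenceFinset_eq_filter, card_incidenceFinset_eq_degree]

theorem sum_edgeFinset_sumOf {M : Type*} [AddCommMonoid M] (G : SimpleGraph V) (g : V → M) :
    ∑ e ∈ G.edgeFinset, Sym2.sumOf g e = ∑ v, G.degree v • g v := by
  calc ∑ e ∈ G.edgeFinset, Sym2.sumOf g e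
      = ∑ e : G.edgeSet, ∑ a, if a ∈ (e : Sym2 V) then g a else 0 := by
        rw [← sum_edgeSet_eq_sum_edgeFinset]
        refine sum_congr rfl fun ⟨e, he⟩ _ => ?_
        induction e using Sym2.ind with
        | _ u v => exact (Sym2.sum_ite_mem_mk (G.ne_of_adj he) g).symm
    _ = ∑ a, ∑ e : G.edgeSet, if a ∈ (e : Sym2 V) then g a else 0 := sum_comm
    _ = ∑ v, G.degree v • g v := by
        refine sum_congr rfl fun a _ => ?_
        rw [← sum_edgeSet_ite_mem, sum_smul]
        simp only [ite_smul, one_smul, zero_smul]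

theorem lineGraph_degree_add_two (G : SimpleGraph V) {u v : V} (he : s(u, v) ∈ G.edgeSet) :
    G.lineGraph.degree ⟨s(u, v), he⟩ + 2 = G.degree u + G.degree v := by
  have huv : u ≠ v := G.ne_of_adj he
  have hcount : ∀ f : G.edgeSet,
      (if u ∈ (f : Sym2 V) then 1 else 0) + (if v ∈ (f : Sym2 V) then 1 else 0) =
        (if G.lineGraph.Adj ⟨s(u, v), he⟩ f then 1 else 0) +
          if f = ⟨s(u, v), he⟩ then 2 else 0 := by
    rintro ⟨f, hf⟩
    by_cases hfe : f = s(u, v)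
    · subst hfe
      simp [huv]
    · have hboth : ¬(u ∈ f ∧ v ∈ f) := fun h => hfe ((Sym2.mem_and_mem_iff huv).mp h)
      by_cases hu : u ∈ f <;> by_cases hv : v ∈ f <;>
        simp_all [lineGraph_adj_iff_exists, Ne.symm hfe]
  rw [← sum_edgeSet_ite_mem G u, ← sum_edgeSet_ite_mem G v, ← sum_add_distrib,
    sum_congr rfl fun f _ => hcount f,
    sum_add_distrib, degree_eq_sum_ite, sum_ite_eq']
  simp

end SimpleGraph

theorem degree_hierProd {α β : Type*} [Fintype α] [Fintype β] (K : SimpleGraph α)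
    (H : SimpleGraph β) (U : Set α) (x : α) (w : β) :
    (hierProd K H U).degree (x, w) = K.degree x + if x ∈ U then H.degree w else 0 := by
  have hnbr : (hierProd K H U).neighborFinset (x, w) =
      K.neighborFinset x ×ˢ {w} ∪ {x} ×ˢ (if x ∈ U then H.neighborFinset w else ∅) := by
    ext ⟨y, z⟩
    rw [mem_neighborFinset]
    by_cases hx : x ∈ U <;> simp [hierProd, hx, eq_comm, and_comm, or_comm]
  rw [degree, hnbr, card_union_of_disjoint
    (disjoint_product.mpr (Or.inl (K.neighborFinset_disjoint_singleton x)))]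
  split_ifs <;> simp

section TotalGraph

variable {V : Type*} (G : SimpleGraph V)

theorem Tgraph_adj_inl_inl (u v : V) : (Tgraph G).Adj (.inl u) (.inl v) ↔ G.Adj u v := by
  simp [Tgraph, Sgraph, Ograph, Lgraph]

theorem Tgraph_adj_inl_inr (u : V) (e : G.edgeSet) :
    (Tgraph G).Adj (.inl u) (.inr e) ↔ u ∈ (e : Sym2 V) := by
  simp [Tgraph, Sgraph, Ograph, Lgraph]

theorem Tgraph_adj_inr_inr (e f : G.edgeSet) :
    (Tgraph G).Adj (.inr e) (.inr f) ↔ G.lineGraph.Adj e f := by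
  simp [Tgraph, Sgraph, Ograph, Lgraph, lineGraph_adj_iff_exists]

variable [Fintype V]

theorem degree_Tgraph_inl (u : V) : (Tgraph G).degree (.inl u) = 2 * G.degree u := by
  simp only [degree_eq_sum_ite, Fintype.sum_sum_type, Tgraph_adj_inl_inl, Tgraph_adj_inl_inr,
    sum_edgeSet_ite_mem]
  ring

theorem degree_Tgraph_inr (e : G.edgeSet) :
    (Tgraph G).degree (.inr e) = Sym2.sumOf (G.degree ·) (e : Sym2 V) := by
  obtain ⟨e, he⟩ := e
  induction e using Sym2.ind with
  | _ u v =>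
    have hends :
        ∑ a, (if (Tgraph G).Adj (.inr ⟨s(u, v), he⟩) (.inl a) then 1 else 0) = 2 := by
      simp only [(Tgraph G).adj_comm (Sum.inr _), Tgraph_adj_inl_inr]
      exact Sym2.sum_ite_mem_mk (G.ne_of_adj he) 1
    rw [degree_eq_sum_ite, Fintype.sum_sum_type, hends]
    simp only [Tgraph_adj_inr_inr]
    rw [← degree_eq_sum_ite, Sym2.sumOf_mk, add_comm, G.lineGraph_degree_add_two he]

end TotalGraph

theorem degree_FSum_inl {V β : Type*} [Fintype V] [Fintype β] {G : SimpleGraph V}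
    (K : SimpleGraph (V ⊕ G.edgeSet)) (H : SimpleGraph β) (u : V) (w : β) :
    (FSum K H).degree (.inl u, w) = K.degree (.inl u) + H.degree w := by
  rw [FSum, degree_hierProd]
  simp

theorem degree_FSum_inr {V β : Type*} [Fintype V] [Fintype β] {G : SimpleGraph V}
    (K : SimpleGraph (V ⊕ G.edgeSet)) (H : SimpleGraph β) (e : G.edgeSet) (w : β) :
    (FSum K H).degree (.inr e, w) = K.degree (.inr e) := by
  rw [FSum, degree_hierProd]
  simp

theorem sum_sum_two_mul_degree_add_degree_pow_three {α β : Type*} [Fintype α] [Fintype β]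
    (G : SimpleGraph α) (H : SimpleGraph β) :
    ∑ u, ∑ w, (2 * G.degree u + H.degree w) ^ 3 =
      8 * Fintype.card β * Findex G + Fintype.card α * Findex H
        + 24 * H.edgeFinset.card * M1 G + 12 * G.edgeFinset.card * M1 H := by
  have hexpand : ∀ u w, (2 * G.degree u + H.degree w) ^ 3 = 8 * G.degree u ^ 3
      + 12 * G.degree u ^ 2 * H.degree w + 6 * G.degree u * H.degree w ^ 2 + H.degree w ^ 3 :=
    fun u w => by ring
  simp only [hexpand, sum_add_distrib, ← mul_sum, ← sum_mul, sum_const, card_univ, smul_eq_mul,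
    sum_degrees_eq_twice_card_edges, Findex, M1]
  ring

theorem sum_edgeFinset_sumOf_degree_pow_three {V : Type*} [Fintype V] (G : SimpleGraph V) :
    ∑ e ∈ G.edgeFinset, Sym2.sumOf (G.degree ·) e ^ 3 = xiIndex G 4 + 3 * ReZG G := by
  have hexpand : ∀ e : Sym2 V, Sym2.sumOf (G.degree ·) e ^ 3 = Sym2.sumOf (G.degree · ^ 3) e
      + 3 * Sym2.lift ⟨fun u v => G.degree u * G.degree v * (G.degree u + G.degree v),
        fun u v => by ring⟩ e := by
    refine Sym2.ind fun u v => ?_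
    simp only [Sym2.sumOf_mk, Sym2.lift_mk]
    ring
  simp only [hexpand, sum_add_distrib, ← mul_sum, sum_edgeFinset_sumOf, smul_eq_mul, ← pow_succ',
    xiIndex, ReZG]

theorem Findex_Tsum_general {α β : Type*} [Fintype α] [Fintype β]
    (G : SimpleGraph α) (H : SimpleGraph β) :
    Findex (FSum (Tgraph G) H) =
      8 * Fintype.card β * Findex G + Fintype.card α * Findex H
        + 24 * H.edgeFinset.card * M1 G + 12 * G.edgeFinset.card * M1 H
        + Fintype.card β * xiIndex G 4 + 3 * Fintype.card β * ReZG G := by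
  rw [Findex, Fintype.sum_prod_type, Fintype.sum_sum_type]
  simp only [degree_FSum_inl, degree_FSum_inr, degree_Tgraph_inl, degree_Tgraph_inr, sum_const,
    card_univ, smul_eq_mul]
  rw [sum_sum_two_mul_degree_add_degree_pow_three, ← mul_sum,
    sum_edgeSet_eq_sum_edgeFinset G (Sym2.sumOf (G.degree ·) · ^ 3),
    sum_edgeFinset_sumOf_degree_pow_three]
  ring

theorem Findex_Tsum {α β : Type*} [Fintype α] [Fintype β]
    (G : SimpleGraph α) (H : SimpleGraph β)
    (hcard : 2 ≤ Fintype.card α) (hG : G.Connected) (hH : H.Connected) :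
    Findex (FSum (Tgraph G) H) =
      8 * Fintype.card β * Findex G + Fintype.card α * Findex H
        + 24 * H.edgeFinset.card * M1 G + 12 * G.edgeFinset.card * M1 H
        + Fintype.card β * xiIndex G 4 + 3 * Fintype.card β * ReZG G :=
  Findex_Tsum_general G H
end
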